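/- arXiv:2006.04002 — 5 statements merged into one kernel-verified Lean document; each statement's English description precedes it below -/
import Mathlib

section
/- Let s₀ > 0 and let γ : ℝ → E be three times continuously differentiable on [0, s₀] with ‖γ'(t)‖ = 1 for all t ∈ [0, s₀] (a unit-speed curve). Then there exist a constant C > 0 and s₁ ∈ (0, s₀] such that for every s ∈ (0, s₁] one has γ(s) ≠ γ(0) and ‖γ'(0) − (γ(s) − γ(0))/‖γ(s) − γ(0)‖‖ ≤ (s/2)·‖γ''(0)‖ + C·s². (This is the paper's Proposition 3.1: the secant-line direction through γ(0) and γ(s) approximates the unit tangent vector γ'(0) with error (s/2)|γ''(0)| + O(s²).) -/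
/-!
Write `u = γ'(0)`, `w = γ''(0)` and `γ(s) - γ(0) = s • (u + p)`. Taylor's theorem gives
`p = (s/2) • w + O(s²)`, so `‖u - (u + p)‖ = ‖p‖ ≤ (s/2)‖w‖ + O(s²)`. Normalising `u + p` moves it
by `|‖u + p‖ - 1| ≤ |2⟪u, p⟫ + ‖p‖²|`, which is `O(s²)` rather than `O(s)` because the unit-speed
condition makes `w` orthogonal to `u`, so that `⟪u, p⟫ = O(s²)`.
-/

open Set
open scoped RealInnerProductSpace

section Taylor

variable {E : Type*} [NormedAddCommGroup E] [NormedSpace ℝ E]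

theorem contDiffOn_succ_of_hasDerivWithinAt {f f' : ℝ → E} {s : Set ℝ} {n : ℕ}
    (hs : UniqueDiffOn ℝ s) (hf : ∀ t ∈ s, HasDerivWithinAt f (f' t) s t)
    (hf' : ContDiffOn ℝ n f' s) : ContDiffOn ℝ (n + 1) f s :=
  (contDiffOn_succ_iff_derivWithin hs).2
    ⟨fun t ht => (hf t ht).differentiableWithinAt, by simp,
      hf'.congr fun t ht => (hf t ht).derivWithin (hs t ht)⟩

theorem iteratedDerivWithin_succ_eqOn {f g g' : ℝ → E} {s : Set ℝ} {n : ℕ}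
    (hs : UniqueDiffOn ℝ s) (h : EqOn (iteratedDerivWithin n f s) g s)
    (hg : ∀ t ∈ s, HasDerivWithinAt g (g' t) s t) :
    EqOn (iteratedDerivWithin (n + 1) f s) g' s := fun t ht => by
  rw [iteratedDerivWithin_succ, derivWithin_congr h (h ht)]
  exact (hg t ht).derivWithin (hs t ht)

theorem norm_sub_taylor_two_le {f f' f'' f''' : ℝ → E} {a b M x : ℝ} (hab : a < b)
    (hf : ∀ t ∈ Icc a b, HasDerivWithinAt f (f' t) (Icc a b) t)
    (hf' : ∀ t ∈ Icc a b, HasDerivWithinAt f' (f'' t) (Icc a b) t)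
    (hf'' : ∀ t ∈ Icc a b, HasDerivWithinAt f'' (f''' t) (Icc a b) t)
    (hf''' : ContinuousOn f''' (Icc a b)) (hM : ∀ t ∈ Icc a b, ‖f''' t‖ ≤ M)
    (hx : x ∈ Icc a b) :
    ‖f x - f a - ((x - a) • f' a + ((x - a) ^ 2 / 2) • f'' a)‖ ≤ M / 2 * (x - a) ^ 3 := by
  have hI := uniqueDiffOn_Icc hab
  have ha : a ∈ Icc a b := left_mem_Icc.2 hab.le
  have hd1 : EqOn (iteratedDerivWithin 1 f (Icc a b)) f' (Icc a b) :=
    iteratedDerivWithin_succ_eqOn hI (g := f) (fun t _ => by rw [iteratedDerivWithin_zero]) hf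
  have hd2 := iteratedDerivWithin_succ_eqOn hI hd1 hf'
  have hd3 := iteratedDerivWithin_succ_eqOn hI hd2 hf''
  have hC3 : ContDiffOn ℝ (2 + 1) f (Icc a b) :=
    contDiffOn_succ_of_hasDerivWithinAt hI hf <| contDiffOn_succ_of_hasDerivWithinAt hI hf' <|
      contDiffOn_succ_of_hasDerivWithinAt hI hf'' <| contDiffOn_zero.2 hf'''
  have htaylor : taylorWithinEval f 2 (Icc a b) a x
      = f a + (x - a) • f' a + ((x - a) ^ 2 / 2) • f'' a := by
    rw [taylor_within_apply, Finset.sum_range_succ, Finset.sum_range_succ, Finset.sum_range_one,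
      iteratedDerivWithin_zero, hd1 ha, hd2 ha]
    norm_num [Nat.factorial, div_eq_inv_mul]
  have h := taylor_mean_remainder_bound hab.le hC3 hx fun t ht => (hd3 ht).symm ▸ hM t ht
  rw [htaylor] at h
  convert h using 2
  · abel
  · norm_num [Nat.factorial]
    ring

end Taylor

section Normalize

variable {E : Type*} [NormedAddCommGroup E]

theorem inv_norm_smul_smul_of_pos [NormedSpace ℝ E] {c : ℝ} (hc : 0 < c) (x : E) :
    ‖c • x‖⁻¹ • (c • x) = ‖x‖⁻¹ • x := by
  rw [norm_smul, Real.norm_of_nonneg hc.le, smul_smul, mul_inv, mul_right_comm,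
    inv_mul_cancel₀ hc.ne', one_mul]

theorem norm_sub_inv_norm_smul_self_le [NormedSpace ℝ E] (x : E) :
    ‖x - ‖x‖⁻¹ • x‖ ≤ |‖x‖ - 1| := by
  rcases eq_or_ne x 0 with rfl | hx
  · simp
  have hx' : ‖x‖ ≠ 0 := norm_ne_zero_iff.2 hx
  have : x - ‖x‖⁻¹ • x = ((‖x‖ - 1) / ‖x‖) • x := by
    rw [sub_div, div_self hx', one_div, sub_smul, one_smul]
  rw [this, norm_smul, Real.norm_eq_abs, abs_div, abs_norm, div_mul_cancel₀ _ hx']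

theorem abs_sub_one_le_abs_sq_sub_one {a : ℝ} (ha : 0 ≤ a) : |a - 1| ≤ |a ^ 2 - 1| := by
  rw [show a ^ 2 - 1 = (a - 1) * (a + 1) by ring, abs_mul]
  exact le_mul_of_one_le_right (abs_nonneg _) (by rw [abs_of_nonneg (by linarith)]; linarith)

variable [InnerProductSpace ℝ E]

theorem norm_sub_inv_norm_smul_add_le {u : E} (hu : ‖u‖ = 1) (p : E) :
    ‖u - ‖u + p‖⁻¹ • (u + p)‖ ≤ ‖p‖ + (2 * |⟪u, p⟫| + ‖p‖ ^ 2) := by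
  have hsq : ‖u + p‖ ^ 2 - 1 = 2 * ⟪u, p⟫ + ‖p‖ ^ 2 := by
    rw [norm_add_sq_real, hu]; ring
  calc ‖u - ‖u + p‖⁻¹ • (u + p)‖
      ≤ ‖u - (u + p)‖ + ‖(u + p) - ‖u + p‖⁻¹ • (u + p)‖ := norm_sub_le_norm_sub_add_norm_sub _ _ _
    _ ≤ ‖p‖ + |‖u + p‖ ^ 2 - 1| := by
        gcongr
        · simp
        · exact (norm_sub_inv_norm_smul_self_le _).trans
            (abs_sub_one_le_abs_sq_sub_one (norm_nonneg _))
    _ ≤ ‖p‖ + (2 * |⟪u, p⟫| + ‖p‖ ^ 2) := by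
        rw [hsq]
        gcongr
        exact (abs_add_le _ _).trans (by rw [abs_mul, abs_two, abs_of_nonneg (sq_nonneg ‖p‖)])

theorem norm_sub_inv_norm_smul_add_le_of_inner_eq_zero {u w p : E} {ε : ℝ} (hu : ‖u‖ = 1)
    (huw : ⟪u, w⟫ = 0) (hp : ‖p - w‖ ≤ ε) (hsmall : ‖w‖ + ε < 1) :
    u + p ≠ 0 ∧ ‖u - ‖u + p‖⁻¹ • (u + p)‖ ≤ ‖w‖ + 3 * ε + (‖w‖ + ε) ^ 2 := by
  have hnorm : ‖p‖ ≤ ‖w‖ + ε := (norm_le_norm_add_norm_sub' p w).trans (by linarith)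
  have hinner : |⟪u, p⟫| ≤ ε := by
    calc |⟪u, p⟫| = |⟪u, p - w⟫| := by rw [inner_sub_right, huw, sub_zero]
      _ ≤ ‖u‖ * ‖p - w‖ := abs_real_inner_le_norm _ _
      _ ≤ ε := by rw [hu, one_mul]; exact hp
  refine ⟨fun h => ?_, ?_⟩
  · rw [eq_neg_of_add_eq_zero_right h, norm_neg] at hnorm
    linarith
  calc ‖u - ‖u + p‖⁻¹ • (u + p)‖ ≤ ‖p‖ + (2 * |⟪u, p⟫| + ‖p‖ ^ 2) :=
        norm_sub_inv_norm_smul_add_le hu p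
    _ ≤ ‖w‖ + ε + (2 * ε + (‖w‖ + ε) ^ 2) := by gcongr
    _ = ‖w‖ + 3 * ε + (‖w‖ + ε) ^ 2 := by ring

theorem secant_estimate_of_taylor {u w d : E} {s A : ℝ} (hu : ‖u‖ = 1) (huw : ⟪u, w⟫ = 0)
    (hs : 0 < s) (hd : ‖d - (s • u + (s ^ 2 / 2) • w)‖ ≤ A * s ^ 3)
    (hsmall : s / 2 * ‖w‖ + A * s ^ 2 < 1) :
    d ≠ 0 ∧ ‖u - ‖d‖⁻¹ • d‖ ≤ s / 2 * ‖w‖ + 3 * (A * s ^ 2) + (s / 2 * ‖w‖ + A * s ^ 2) ^ 2 := by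
  set p := s⁻¹ • d - u with hp_def
  have hdp : d = s • (u + p) := by rw [add_sub_cancel, smul_inv_smul₀ hs.ne']
  have hp : ‖p - (s / 2) • w‖ ≤ A * s ^ 2 := by
    have : p - (s / 2) • w = s⁻¹ • (d - (s • u + (s ^ 2 / 2) • w)) := by
      rw [hp_def]
      match_scalars <;> field_simp
    rw [this, norm_smul, Real.norm_of_nonneg (inv_nonneg.2 hs.le), inv_mul_le_iff₀ hs]
    linarith
  have hw : ‖(s / 2) • w‖ = s / 2 * ‖w‖ := by rw [norm_smul, Real.norm_of_nonneg (by positivity)]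
  obtain ⟨hne, hle⟩ := norm_sub_inv_norm_smul_add_le_of_inner_eq_zero hu
    (by rw [inner_smul_right, huw, mul_zero]) hp (by rwa [hw])
  rw [hdp, inv_norm_smul_smul_of_pos hs, ← hw]
  exact ⟨smul_ne_zero hs.ne' hne, hle⟩

theorem HasDerivWithinAt.inner_eq_zero_of_norm_eq {c : ℝ → E} {c' : E} {s : Set ℝ} {t r : ℝ}
    (hc : HasDerivWithinAt c c' s t) (hs : UniqueDiffWithinAt ℝ s t) (ht : t ∈ s)
    (hnorm : ∀ x ∈ s, ‖c x‖ = r) : ⟪c t, c'⟫ = 0 := by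
  have hconst : HasDerivWithinAt (‖c ·‖ ^ 2) 0 s t :=
    (hasDerivWithinAt_const t s (r ^ 2)).congr (fun x hx => by rw [hnorm x hx])
      (by rw [hnorm t ht])
  have := hs.eq_deriv s hc.norm_sq hconst
  linarith

end Normalize

/-- Proposition 3.1 (secant-line approximation of the unit tangent vector):
for a unit-speed `C³` curve `γ` on `[0, s₀]`, there are `C > 0` and `s₁ ∈ (0, s₀]`
such that for every `s ∈ (0, s₁]`, `γ s ≠ γ 0` and
`‖γ'(0) − (γ(s) − γ(0))/‖γ(s) − γ(0)‖‖ ≤ (s/2)‖γ''(0)‖ + C s²`. -/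
theorem secant_line_tangent_estimate (n : ℕ) (s₀ : ℝ) (hs₀ : 0 < s₀)
    (γ γ' γ'' γ''' : ℝ → EuclideanSpace ℝ (Fin n))
    (hγ1 : ∀ t ∈ Set.Icc (0 : ℝ) s₀, HasDerivAt γ (γ' t) t)
    (hγ2 : ∀ t ∈ Set.Icc (0 : ℝ) s₀, HasDerivAt γ' (γ'' t) t)
    (hγ3 : ∀ t ∈ Set.Icc (0 : ℝ) s₀, HasDerivAt γ'' (γ''' t) t)
    (hγcont : ContinuousOn γ''' (Set.Icc (0 : ℝ) s₀))
    (hunit : ∀ t ∈ Set.Icc (0 : ℝ) s₀, ‖γ' t‖ = 1) :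
    ∃ C > (0 : ℝ), ∃ s₁ ∈ Set.Ioc (0 : ℝ) s₀, ∀ s ∈ Set.Ioc (0 : ℝ) s₁,
      γ s ≠ γ 0 ∧
      ‖γ' 0 - (‖γ s - γ 0‖)⁻¹ • (γ s - γ 0)‖ ≤ s / 2 * ‖γ'' 0‖ + C * s ^ 2 := by
  have h0 : (0 : ℝ) ∈ Icc 0 s₀ := left_mem_Icc.2 hs₀.le
  obtain ⟨M, hM⟩ := isCompact_Icc.exists_bound_of_continuousOn hγcont
  have hM0 : 0 ≤ M := (norm_nonneg _).trans (hM 0 h0)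
  have horth : ⟪γ' 0, γ'' 0⟫ = 0 := (hγ2 0 h0).hasDerivWithinAt.inner_eq_zero_of_norm_eq
    (uniqueDiffOn_Icc hs₀ 0 h0) h0 hunit
  set K := ‖γ'' 0‖ / 2 + M / 2 * s₀ with hK
  refine ⟨3 * (M / 2) + K ^ 2 + 1, by positivity, min s₀ (K + 1)⁻¹,
    ⟨by positivity, min_le_left _ _⟩, ?_⟩
  rintro s ⟨hs, hs₁⟩
  have hsI : s ∈ Icc 0 s₀ := ⟨hs.le, hs₁.trans (min_le_left _ _)⟩
  have hKs : K * s < 1 :=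
    calc K * s < (K + 1) * s := by linarith
      _ ≤ (K + 1) * (K + 1)⁻¹ := by gcongr; exact hs₁.trans (min_le_right _ _)
      _ = 1 := mul_inv_cancel₀ (by positivity)
  have hsK : s / 2 * ‖γ'' 0‖ + M / 2 * s ^ 2 ≤ K * s := by
    rw [hK]
    nlinarith [mul_le_mul_of_nonneg_left hsI.2 (by positivity : 0 ≤ M / 2 * s)]
  have htaylor := norm_sub_taylor_two_le hs₀ (fun t ht => (hγ1 t ht).hasDerivWithinAt)
    (fun t ht => (hγ2 t ht).hasDerivWithinAt) (fun t ht => (hγ3 t ht).hasDerivWithinAt)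
    hγcont hM hsI
  rw [sub_zero] at htaylor
  obtain ⟨hne, hle⟩ := secant_estimate_of_taylor (hunit 0 h0) horth hs htaylor (hsK.trans_lt hKs)
  refine ⟨sub_ne_zero.1 hne, hle.trans ?_⟩
  nlinarith [mul_le_mul_of_nonneg_left hsK (by positivity : 0 ≤ s / 2 * ‖γ'' 0‖ + M / 2 * s ^ 2)]
end

section
/- Let s₀ > 0 and let γ : ℝ → E be four times continuously differentiable on [0, s₀] with ‖γ'(t)‖ = 1 for all t ∈ [0, s₀] (a unit-speed curve). Then there exists a constant C > 0 such that for all s ∈ [0, s₀]: |‖γ(s) − γ(0)‖² − s² − s⁴·((1/4)·‖γ''(0)‖² + (1/3)·⟨γ'(0), γ'''(0)⟩)| ≤ C·s⁵. (This is the chord-length-squared expansion |γ(s) − γ(0)|² = s² + s⁴(¼|γ''(0)|² + ⅓⟨γ'(0), γ'''(0)⟩) + O(s⁵) established in the proof of Proposition 3.1.) -/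
/-!
Taylor's theorem with `‖γ''''‖ ≤ M` on `[0, s₀]` writes `γ s - γ 0 = v s + r s` with
`v s = s • γ' 0 + (s ^ 2 / 2) • γ'' 0 + (s ^ 3 / 6) • γ''' 0` and `‖r s‖ ≤ M s ^ 4 / 6`.
Since `‖v s‖ = O(s)`, the cross term makes `‖γ s - γ 0‖ ^ 2 = ‖v s‖ ^ 2 + O(s ^ 5)`, and expanding
`‖v s‖ ^ 2` with `‖γ' 0‖ = 1` and `⟪γ' 0, γ'' 0⟫ = 0` (differentiate `‖γ'‖ ^ 2 = 1`) leaves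
`s ^ 2 + s ^ 4 (¼ ‖γ'' 0‖ ^ 2 + ⅓ ⟪γ' 0, γ''' 0⟫) + O(s ^ 5)`.
-/

open Set
open scoped RealInnerProductSpace Nat

section

variable {E : Type*} [NormedAddCommGroup E] [NormedSpace ℝ E] {f : ℕ → ℝ → E} {s : Set ℝ}

theorem iteratedDerivWithin_eq_of_hasDerivWithinAt_chain (hs : UniqueDiffOn ℝ s) {n : ℕ}
    (hf : ∀ k < n, ∀ t ∈ s, HasDerivWithinAt (f k) (f (k + 1) t) s t) :
    ∀ k ≤ n, ∀ t ∈ s, iteratedDerivWithin k (f 0) s t = f k t := by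
  intro k hk
  induction k with
  | zero => exact fun t _ => congrFun iteratedDerivWithin_zero t
  | succ k ih =>
    intro t ht
    have hprev := ih (by omega)
    rw [iteratedDerivWithin_succ, derivWithin_congr (fun u hu => hprev u hu) (hprev t ht)]
    exact (hf k (by omega) t ht).derivWithin (hs t ht)

theorem contDiffOn_of_hasDerivWithinAt_chain (hs : UniqueDiffOn ℝ s) {n : ℕ}
    (hf : ∀ k < n, ∀ t ∈ s, HasDerivWithinAt (f k) (f (k + 1) t) s t)
    (hcont : ContinuousOn (f n) s) : ContDiffOn ℝ n (f 0) s := by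
  induction n generalizing f with
  | zero => simpa [contDiffOn_zero] using hcont
  | succ n ih =>
    have hf0 := hf 0 n.succ_pos
    rw [Nat.cast_succ, contDiffOn_succ_iff_derivWithin hs]
    refine ⟨fun t ht => (hf0 t ht).differentiableWithinAt, by simp, ?_⟩
    refine (ih (f := fun k => f (k + 1)) (fun k hk => hf (k + 1) (by omega)) hcont).congr ?_
    exact fun t ht => (hf0 t ht).derivWithin (hs t ht)

theorem taylor_mean_remainder_bound_of_hasDerivWithinAt_chain {a b C x : ℝ} (hab : a < b) {n : ℕ}
    (hf : ∀ k ≤ n, ∀ t ∈ Icc a b, HasDerivWithinAt (f k) (f (k + 1) t) (Icc a b) t)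
    (hcont : ContinuousOn (f (n + 1)) (Icc a b)) (hC : ∀ t ∈ Icc a b, ‖f (n + 1) t‖ ≤ C)
    (hx : x ∈ Icc a b) :
    ‖f 0 x - ∑ k ∈ Finset.range (n + 1), ((k ! : ℝ)⁻¹ * (x - a) ^ k) • f k a‖ ≤
      C * (x - a) ^ (n + 1) / n ! := by
  have hs := uniqueDiffOn_Icc hab
  have hf' : ∀ k < n + 1, ∀ t ∈ Icc a b, HasDerivWithinAt (f k) (f (k + 1) t) (Icc a b) t :=
    fun k hk => hf k (by omega)
  have hD := iteratedDerivWithin_eq_of_hasDerivWithinAt_chain hs hf'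
  have hcd : ContDiffOn ℝ (n + 1) (f 0) (Icc a b) := by
    exact_mod_cast contDiffOn_of_hasDerivWithinAt_chain hs hf' hcont
  have := taylor_mean_remainder_bound hab.le hcd hx fun t ht => hD _ le_rfl t ht ▸ hC t ht
  rwa [taylor_within_apply, Finset.sum_congr rfl fun k hk => by
    rw [hD k (Finset.mem_range.1 hk).le a (left_mem_Icc.2 hab.le)]] at this

end

section

variable {F : Type*} [NormedAddCommGroup F] [InnerProductSpace ℝ F]

theorem inner_eq_zero_of_hasDerivWithinAt_of_norm_eq {g : ℝ → F} {g' : F} {s : Set ℝ}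
    {t c : ℝ} (hs : UniqueDiffWithinAt ℝ s t) (ht : t ∈ s) (hg : HasDerivWithinAt g g' s t)
    (hc : ∀ u ∈ s, ‖g u‖ = c) : ⟪g t, g'⟫ = 0 := by
  have hconst : ∀ u ∈ s, ⟪g u, g u⟫ = c ^ 2 := fun u hu => by
    rw [real_inner_self_eq_norm_sq, hc u hu]
  have h := hs.eq_deriv _ (hg.inner ℝ hg)
    ((hasDerivWithinAt_const t s (c ^ 2)).congr hconst (hconst t ht))
  rw [real_inner_comm (g t) g'] at h
  linarith

theorem norm_sq_cubic_taylor (a b c : F) (s : ℝ) :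
    ‖s • a + (s ^ 2 / 2) • b + (s ^ 3 / 6) • c‖ ^ 2 =
      s ^ 2 * ‖a‖ ^ 2 + s ^ 3 * ⟪a, b⟫ + s ^ 4 * ((1 / 4) * ‖b‖ ^ 2 + (1 / 3) * ⟪a, c⟫) +
        s ^ 5 * (⟪b, c⟫ / 6 + s * ‖c‖ ^ 2 / 36) := by
  simp only [← real_inner_self_eq_norm_sq, inner_add_left, inner_add_right, inner_smul_left,
    inner_smul_right, real_inner_comm a b, real_inner_comm a c, real_inner_comm b c,
    RCLike.conj_to_real]
  ring

theorem norm_cubic_taylor_le (a b c : F) {s s₀ : ℝ} (hs : s ∈ Icc 0 s₀) :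
    ‖s • a + (s ^ 2 / 2) • b + (s ^ 3 / 6) • c‖ ≤
      (‖a‖ + s₀ / 2 * ‖b‖ + s₀ ^ 2 / 6 * ‖c‖) * s := by
  obtain ⟨hs0, hss₀⟩ := hs
  have hsub := sub_nonneg.2 hss₀
  calc _ ≤ ‖s • a‖ + ‖(s ^ 2 / 2) • b‖ + ‖(s ^ 3 / 6) • c‖ := norm_add₃_le
    _ = s * ‖a‖ + s ^ 2 / 2 * ‖b‖ + s ^ 3 / 6 * ‖c‖ := by
      rw [norm_smul, norm_smul, norm_smul, Real.norm_of_nonneg hs0,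
        Real.norm_of_nonneg (by positivity), Real.norm_of_nonneg (by positivity)]
    _ ≤ _ := by
      nlinarith [mul_nonneg (mul_nonneg hs0 hsub) (norm_nonneg b),
        mul_nonneg (mul_nonneg (mul_nonneg hs0 hsub) (add_nonneg (hs0.trans hss₀) hs0))
          (norm_nonneg c)]

theorem abs_norm_add_sq_sub_norm_sq_le (v r : F) :
    |‖v + r‖ ^ 2 - ‖v‖ ^ 2| ≤ (2 * ‖v‖ + ‖r‖) * ‖r‖ := by
  rw [norm_add_sq_real, abs_le]
  have := abs_real_inner_le_norm v r
  constructor <;> nlinarith [abs_le.1 this, norm_nonneg r, norm_nonneg v]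

theorem exists_abs_norm_sq_sub_le_of_norm_sub_cubic_le {a b c : F} (ha : ‖a‖ = 1)
    (hab : ⟪a, b⟫ = 0) {M : ℝ} (hM : 0 ≤ M) (s₀ : ℝ) :
    ∃ K > 0, ∀ s ∈ Icc 0 s₀, ∀ x : F,
      ‖x - (s • a + (s ^ 2 / 2) • b + (s ^ 3 / 6) • c)‖ ≤ M * s ^ 4 →
      |‖x‖ ^ 2 - s ^ 2 - s ^ 4 * ((1 / 4) * ‖b‖ ^ 2 + (1 / 3) * ⟪a, c⟫)| ≤ K * s ^ 5 := by
  set A := 1 + s₀ / 2 * ‖b‖ + s₀ ^ 2 / 6 * ‖c‖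
  set K := (2 * A + M * s₀ ^ 3) * M + ‖b‖ * ‖c‖ / 6 + s₀ * ‖c‖ ^ 2 / 36
  refine ⟨max 1 K, by positivity, fun s hs x hx => ?_⟩
  obtain ⟨hs0, hss₀⟩ := id hs
  set v := s • a + (s ^ 2 / 2) • b + (s ^ 3 / 6) • c
  have hv : ‖v‖ ≤ A * s := by simpa only [ha] using norm_cubic_taylor_le a b c hs
  have hpoly : ‖v‖ ^ 2 - s ^ 2 - s ^ 4 * ((1 / 4) * ‖b‖ ^ 2 + (1 / 3) * ⟪a, c⟫) =
      s ^ 5 * (⟪b, c⟫ / 6 + s * ‖c‖ ^ 2 / 36) := by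
    rw [norm_sq_cubic_taylor, ha, hab]; ring
  have hrem : |‖x‖ ^ 2 - ‖v‖ ^ 2| ≤ (2 * A + M * s₀ ^ 3) * M * s ^ 5 :=
    calc |‖x‖ ^ 2 - ‖v‖ ^ 2| = |‖v + (x - v)‖ ^ 2 - ‖v‖ ^ 2| := by rw [add_sub_cancel]
      _ ≤ (2 * ‖v‖ + ‖x - v‖) * ‖x - v‖ := abs_norm_add_sq_sub_norm_sq_le _ _
      _ ≤ (2 * (A * s) + M * s ^ 4) * (M * s ^ 4) := by
        gcongr; linarith [norm_nonneg v, norm_nonneg (x - v)]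
      _ = (2 * A + M * s ^ 3) * M * s ^ 5 := by ring
      _ ≤ (2 * A + M * s₀ ^ 3) * M * s ^ 5 := by gcongr
  have htail : |s ^ 5 * (⟪b, c⟫ / 6 + s * ‖c‖ ^ 2 / 36)| ≤
      (‖b‖ * ‖c‖ / 6 + s₀ * ‖c‖ ^ 2 / 36) * s ^ 5 := by
    rw [abs_mul, abs_of_nonneg (by positivity), mul_comm]
    gcongr
    have hbc := abs_le.1 (abs_real_inner_le_norm b c)
    have hc : s * ‖c‖ ^ 2 ≤ s₀ * ‖c‖ ^ 2 := by gcongr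
    rw [abs_le]; constructor <;> linarith [mul_nonneg hs0 (sq_nonneg ‖c‖)]
  calc |‖x‖ ^ 2 - s ^ 2 - s ^ 4 * ((1 / 4) * ‖b‖ ^ 2 + (1 / 3) * ⟪a, c⟫)|
      = |(‖x‖ ^ 2 - ‖v‖ ^ 2) + s ^ 5 * (⟪b, c⟫ / 6 + s * ‖c‖ ^ 2 / 36)| := by
        rw [← hpoly]; ring_nf
    _ ≤ K * s ^ 5 := by
        refine (abs_add_le _ _).trans ((add_le_add hrem htail).trans_eq ?_)
        ring
    _ ≤ max 1 K * s ^ 5 := by gcongr; exact le_max_right _ _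

end

/-- Chord-length-squared expansion from the proof of Proposition 3.1:
for a unit-speed `C⁴` curve `γ` on `[0, s₀]`,
`|‖γ(s) − γ(0)‖² − s² − s⁴(¼‖γ''(0)‖² + ⅓⟨γ'(0), γ'''(0)⟩)| ≤ C s⁵`. -/
theorem chord_length_squared_expansion (n : ℕ) (s₀ : ℝ) (hs₀ : 0 < s₀)
    (γ γ' γ'' γ''' γ'''' : ℝ → EuclideanSpace ℝ (Fin n))
    (hγ1 : ∀ t ∈ Set.Icc (0 : ℝ) s₀, HasDerivAt γ (γ' t) t)
    (hγ2 : ∀ t ∈ Set.Icc (0 : ℝ) s₀, HasDerivAt γ' (γ'' t) t)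
    (hγ3 : ∀ t ∈ Set.Icc (0 : ℝ) s₀, HasDerivAt γ'' (γ''' t) t)
    (hγ4 : ∀ t ∈ Set.Icc (0 : ℝ) s₀, HasDerivAt γ''' (γ'''' t) t)
    (hγcont : ContinuousOn γ'''' (Set.Icc (0 : ℝ) s₀))
    (hunit : ∀ t ∈ Set.Icc (0 : ℝ) s₀, ‖γ' t‖ = 1) :
    ∃ C > (0 : ℝ), ∀ s ∈ Set.Icc (0 : ℝ) s₀,
      |‖γ s - γ 0‖ ^ 2 - s ^ 2 -
          s ^ 4 * ((1 / 4) * ‖γ'' 0‖ ^ 2 + (1 / 3) * ⟪γ' 0, γ''' 0⟫)| ≤ C * s ^ 5 := by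
  have h0 : (0 : ℝ) ∈ Icc 0 s₀ := left_mem_Icc.2 hs₀.le
  have hperp : ⟪γ' 0, γ'' 0⟫ = 0 := inner_eq_zero_of_hasDerivWithinAt_of_norm_eq
    (uniqueDiffOn_Icc hs₀ 0 h0) h0 (hγ2 0 h0).hasDerivWithinAt hunit
  obtain ⟨M, hM⟩ := isCompact_Icc.exists_bound_of_continuousOn hγcont
  have hM6 : 0 ≤ M / 6 := by
    have := (norm_nonneg _).trans (hM 0 h0)
    positivity
  obtain ⟨K, hK, hexp⟩ := exists_abs_norm_sq_sub_le_of_norm_sub_cubic_le (c := γ''' 0)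
    (hunit 0 h0) hperp hM6 s₀
  refine ⟨K, hK, fun s hs => hexp s hs _ ?_⟩
  let D : ℕ → ℝ → EuclideanSpace ℝ (Fin n) := fun k =>
    match k with | 0 => γ | 1 => γ' | 2 => γ'' | 3 => γ''' | _ => γ''''
  have hD : ∀ k ≤ 3, ∀ t ∈ Icc 0 s₀, HasDerivWithinAt (D k) (D (k + 1) t) (Icc 0 s₀) t := by
    intro k hk t ht
    interval_cases k
    exacts [(hγ1 t ht).hasDerivWithinAt, (hγ2 t ht).hasDerivWithinAt,
      (hγ3 t ht).hasDerivWithinAt, (hγ4 t ht).hasDerivWithinAt]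
  have htaylor := taylor_mean_remainder_bound_of_hasDerivWithinAt_chain hs₀ hD hγcont hM hs
  simp only [Nat.reduceAdd, sub_zero, Finset.sum_range_succ, Finset.range_one,
    Finset.sum_singleton, Nat.factorial, Nat.cast_one, inv_one, pow_zero, mul_one, one_smul,
    Nat.succ_eq_add_one, zero_add, pow_one, one_mul, Nat.cast_ofNat, Nat.reduceMul, D] at htaylor
  rw [show M / 6 * s ^ 4 = M * s ^ 4 / 6 by ring]
  convert htaylor using 2
  module
end

section
/- Let s₀ > 0 and let γ : ℝ → E be three times continuously differentiable on [0, s₀] with ‖γ'(t)‖ = 1 for all t ∈ [0, s₀] (a unit-speed curve). Then there exist a constant C > 0 and s₁ ∈ (0, s₀] such that for every s ∈ (0, s₁]: γ(s) ≠ γ(0) and ‖(γ(s) − γ(0))/‖γ(s) − γ(0)‖ − γ'(0) − (s/2)·γ''(0)‖ ≤ C·s². (The normalized secant direction expansion (γ(s) − γ(0))/|γ(s) − γ(0)| = γ'(0) + (s/2)γ''(0) + O(s²) from the proof of Proposition 3.1.) -/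
open Set InnerProductSpace

/-!
Taylor's theorem with the bound on `γ'''` gives
`γ s - γ 0 = s • (γ' 0 + (s / 2) • γ'' 0) + O(s³)`. Differentiating `‖γ'‖² = 1` shows that
`γ' 0 ⟂ γ'' 0`, so `w = γ' 0 + (s / 2) • γ'' 0` has norm `1 + O(s²)`; and normalizing a vector
that is `O(s²)`-close to `w` moves it by `O(s²)` only.
-/

section Taylor

variable {E : Type*} [NormedAddCommGroup E] [NormedSpace ℝ E]

lemma norm_le_pow_succ_of_norm_deriv_le_pow {f f' : ℝ → E} {b c : ℝ} {k : ℕ}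
    (hf : ∀ t ∈ Icc 0 b, HasDerivAt f (f' t) t) (h0 : f 0 = 0)
    (hf' : ∀ t ∈ Icc 0 b, ‖f' t‖ ≤ c * t ^ k) :
    ∀ t ∈ Icc 0 b, ‖f t‖ ≤ c / (k + 1) * t ^ (k + 1) := by
  refine image_norm_le_of_norm_deriv_right_le_deriv_boundary
    (fun t ht => (hf t ht).continuousAt.continuousWithinAt)
    (fun t ht => (hf t (Ico_subset_Icc_self ht)).hasDerivWithinAt) (by simp [h0]) (fun t => ?_)
    (fun t ht => hf' t (Ico_subset_Icc_self ht))
  refine ((hasDerivAt_pow (k + 1) t).const_mul (c / (k + 1))).congr_deriv ?_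
  push_cast
  field_simp

lemma norm_taylor_remainder_two_le {γ γ' γ'' γ''' : ℝ → E} {b M : ℝ}
    (hγ1 : ∀ t ∈ Icc 0 b, HasDerivAt γ (γ' t) t)
    (hγ2 : ∀ t ∈ Icc 0 b, HasDerivAt γ' (γ'' t) t)
    (hγ3 : ∀ t ∈ Icc 0 b, HasDerivAt γ'' (γ''' t) t)
    (hM : ∀ t ∈ Icc 0 b, ‖γ''' t‖ ≤ M) :
    ∀ t ∈ Icc 0 b, ‖γ t - γ 0 - t • γ' 0 - (t ^ 2 / 2) • γ'' 0‖ ≤ M / 6 * t ^ 3 := by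
  have h2 := norm_le_pow_succ_of_norm_deriv_le_pow (k := 0) (f := fun t => γ'' t - γ'' 0)
    (fun t ht => (hγ3 t ht).sub_const _) (sub_self _) (by simpa using hM)
  have h1 := norm_le_pow_succ_of_norm_deriv_le_pow (k := 1)
    (f := fun t => γ' t - γ' 0 - t • γ'' 0)
    (fun t ht => (((hγ2 t ht).sub_const (γ' 0)).fun_sub
      ((hasDerivAt_id t).smul_const (γ'' 0))).congr_deriv (by rw [one_smul]))
    (by simp) (by simpa using h2)
  have hsq (t : ℝ) : HasDerivAt (fun t : ℝ => t ^ 2 / 2) t t := by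
    refine ((hasDerivAt_pow 2 t).div_const 2).congr_deriv ?_
    push_cast
    ring
  have h0 := norm_le_pow_succ_of_norm_deriv_le_pow (k := 2)
    (f := fun t => γ t - γ 0 - t • γ' 0 - (t ^ 2 / 2) • γ'' 0)
    (fun t ht => (((hγ1 t ht).sub_const (γ 0)).fun_sub
      ((hasDerivAt_id t).smul_const (γ' 0))).fun_sub ((hsq t).smul_const (γ'' 0))
        |>.congr_deriv (by rw [one_smul]))
    (by simp) h1
  intro t ht
  convert h0 t ht using 2
  norm_num [div_div]

end Taylor

section InnerProduct

variable {F : Type*} [NormedAddCommGroup F] [InnerProductSpace ℝ F]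

lemma inner_eq_zero_of_hasDerivWithinAt_of_forall_norm_eq {g : ℝ → F} {g' : F} {s : Set ℝ}
    {x c : ℝ} (hg : HasDerivWithinAt g g' s x) (hs : UniqueDiffWithinAt ℝ s x) (hx : x ∈ s)
    (hnorm : ∀ t ∈ s, ‖g t‖ = c) : ⟪g x, g'⟫_ℝ = 0 := by
  have hconst : HasDerivWithinAt (fun t => ⟪g t, g t⟫_ℝ) 0 s x :=
    (hasDerivWithinAt_const x s (c ^ 2)).congr_of_mem
      (fun t ht => by rw [real_inner_self_eq_norm_sq, hnorm t ht]) hx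
  have hsum := hs.eq_deriv _ (hg.inner ℝ hg) hconst
  rw [real_inner_comm (g x) g'] at hsum
  linarith

lemma norm_add_sub_one_le_of_inner_eq_zero {a b : F} (ha : ‖a‖ = 1) (hab : ⟪a, b⟫_ℝ = 0) :
    1 ≤ ‖a + b‖ ∧ ‖a + b‖ - 1 ≤ ‖b‖ ^ 2 := by
  have hsq : ‖a + b‖ ^ 2 = 1 + ‖b‖ ^ 2 := by
    rw [sq, sq, norm_add_sq_eq_norm_sq_add_norm_sq_real hab, ha, one_mul]
  have hone : 1 ≤ ‖a + b‖ := by nlinarith [norm_nonneg (a + b), sq_nonneg ‖b‖]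
  exact ⟨hone, by nlinarith⟩

end InnerProduct

namespace NormedSpace

variable {E : Type*} [NormedAddCommGroup E] [NormedSpace ℝ E]

lemma norm_normalize_sub_self_le (v : E) : ‖normalize v - v‖ ≤ |1 - ‖v‖| := by
  rcases eq_or_ne v 0 with rfl | hv
  · simp
  have hv' : (‖v‖⁻¹ - 1) * ‖v‖ = 1 - ‖v‖ := by field_simp
  rw [normalize, ← hv', abs_mul, abs_norm, ← Real.norm_eq_abs, ← norm_smul, sub_smul, one_smul]

lemma norm_normalize_sub_le (v w : E) : ‖normalize v - w‖ ≤ 2 * ‖v - w‖ + |‖w‖ - 1| := by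
  have h1 := norm_sub_le_norm_sub_add_norm_sub (normalize v) v w
  have h2 := norm_normalize_sub_self_le v
  have h3 := abs_sub_le (1 : ℝ) ‖w‖ ‖v‖
  have h4 := abs_norm_sub_norm_le w v
  rw [abs_sub_comm 1 ‖w‖] at h3
  rw [norm_sub_rev w] at h4
  linarith

end NormedSpace

lemma normalize_secant_estimate {F : Type*} [NormedAddCommGroup F] [InnerProductSpace ℝ F]
    {a b u : F} {s K : ℝ} (hs : 0 < s) (ha : ‖a‖ = 1) (hab : ⟪a, b⟫_ℝ = 0)
    (hu : ‖u - s • a - (s ^ 2 / 2) • b‖ ≤ K * s ^ 3) (hKs : K * s ^ 2 < 1) :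
    u ≠ 0 ∧ ‖NormedSpace.normalize u - a - (s / 2) • b‖ ≤ (2 * K + ‖b‖ ^ 2 / 4) * s ^ 2 := by
  set w := a + (s / 2) • b
  set v := s⁻¹ • u
  have hvw : ‖v - w‖ ≤ K * s ^ 2 := by
    have : v - w = s⁻¹ • (u - s • a - (s ^ 2 / 2) • b) := by
      simp only [v, w, smul_sub, smul_smul, inv_mul_cancel₀ hs.ne', one_smul]
      rw [show s⁻¹ * (s ^ 2 / 2) = s / 2 by field_simp]
      abel
    rw [this, norm_smul, Real.norm_of_nonneg (inv_nonneg.2 hs.le), inv_mul_le_iff₀ hs]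
    linarith
  obtain ⟨hw1, hw2⟩ := norm_add_sub_one_le_of_inner_eq_zero ha
    (by rw [inner_smul_right, hab, mul_zero] : ⟪a, (s / 2) • b⟫_ℝ = 0)
  have hbs : ‖(s / 2) • b‖ ^ 2 = ‖b‖ ^ 2 / 4 * s ^ 2 := by
    rw [norm_smul, Real.norm_of_nonneg (by positivity)]
    ring
  have huv : u = s • v := by simp only [v, smul_smul, mul_inv_cancel₀ hs.ne', one_smul]
  have hv : v ≠ 0 := by
    rw [← norm_pos_iff]
    linarith [norm_sub_norm_le w v, norm_sub_rev v w]
  refine ⟨by rw [huv]; exact smul_ne_zero hs.ne' hv, ?_⟩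
  rw [huv, NormedSpace.normalize_smul_of_pos hs, sub_sub]
  calc ‖NormedSpace.normalize v - w‖ ≤ 2 * ‖v - w‖ + |‖w‖ - 1| :=
      NormedSpace.norm_normalize_sub_le v w
    _ ≤ (2 * K + ‖b‖ ^ 2 / 4) * s ^ 2 := by
      rw [abs_of_nonneg (by linarith)]
      linarith

/-- Normalized secant direction expansion from the proof of Proposition 3.1:
for a unit-speed `C³` curve `γ`, there are `C > 0` and `s₁ ∈ (0, s₀]` such that
for `s ∈ (0, s₁]`, `γ s ≠ γ 0` and
`‖(γ(s) − γ(0))/‖γ(s) − γ(0)‖ − γ'(0) − (s/2)γ''(0)‖ ≤ C s²`. -/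
theorem normalized_secant_expansion (n : ℕ) (s₀ : ℝ) (hs₀ : 0 < s₀)
    (γ γ' γ'' γ''' : ℝ → EuclideanSpace ℝ (Fin n))
    (hγ1 : ∀ t ∈ Set.Icc (0 : ℝ) s₀, HasDerivAt γ (γ' t) t)
    (hγ2 : ∀ t ∈ Set.Icc (0 : ℝ) s₀, HasDerivAt γ' (γ'' t) t)
    (hγ3 : ∀ t ∈ Set.Icc (0 : ℝ) s₀, HasDerivAt γ'' (γ''' t) t)
    (hγcont : ContinuousOn γ''' (Set.Icc (0 : ℝ) s₀))
    (hunit : ∀ t ∈ Set.Icc (0 : ℝ) s₀, ‖γ' t‖ = 1) :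
    ∃ C > (0 : ℝ), ∃ s₁ ∈ Set.Ioc (0 : ℝ) s₀, ∀ s ∈ Set.Ioc (0 : ℝ) s₁,
      γ s ≠ γ 0 ∧
      ‖(‖γ s - γ 0‖)⁻¹ • (γ s - γ 0) - γ' 0 - (s / 2) • γ'' 0‖ ≤ C * s ^ 2 := by
  have h0 : (0 : ℝ) ∈ Icc 0 s₀ := left_mem_Icc.2 hs₀.le
  obtain ⟨M, hM⟩ := isCompact_Icc.exists_bound_of_continuousOn hγcont
  have hM0 : 0 ≤ M := (norm_nonneg _).trans (hM 0 h0)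
  have htaylor := norm_taylor_remainder_two_le hγ1 hγ2 hγ3 hM
  have horth := inner_eq_zero_of_hasDerivWithinAt_of_forall_norm_eq (hγ2 0 h0).hasDerivWithinAt
    (uniqueDiffOn_Icc hs₀ 0 h0) h0 hunit
  refine ⟨2 * (M / 6) + ‖γ'' 0‖ ^ 2 / 4 + 1, by positivity, min s₀ (1 / (M / 6 + 1)),
    ⟨lt_min hs₀ (by positivity), min_le_left _ _⟩, fun s ⟨hs, hs₁⟩ => ?_⟩
  have hsK : M / 6 * s ^ 2 < 1 := by
    have : s * (M / 6 + 1) ≤ 1 := (le_div_iff₀ (by positivity)).1 (hs₁.trans (min_le_right _ _))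
    nlinarith
  obtain ⟨hne, hest⟩ := normalize_secant_estimate hs (hunit 0 h0) horth
    (htaylor s ⟨hs.le, hs₁.trans (min_le_left _ _)⟩) hsK
  exact ⟨sub_ne_zero.1 hne, hest.trans (mul_le_mul_of_nonneg_right (by linarith) (sq_nonneg s))⟩
end

section
/- Fix an integer K ≥ 1 and let F : Matrix (Fin K) (Fin K) ℝ be defined by F i j = (i − j + 1)·(i − j + 2)/2 if i ≥ j and F i j = 0 otherwise (indices 0, …, K−1, with i − j computed in ℤ). Then for each row i, the sum ∑_j |F i j| = (i+1)·(i+2)·(i+3)/6, and consequently the maximum absolute row sum (the ∞-operator norm of F) equals K·(K+1)·(K+2)/6, attained at the last row i = K−1. (This is the claim ‖E₀⁻¹‖_∞ = K(K+1)(K+2)/6 in Appendix B of the paper, where F = E₀⁻¹.) -/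
/-!
Entry `(i, j)` of `F` depends only on the offset `i - j`, and its absolute value is the
triangular number `(s + 1)(s + 2)/2` at `s = i - j` (zero above the diagonal). Row `i` therefore
sums the first `i + 1` triangular numbers, which is the tetrahedral number `(i+1)(i+2)(i+3)/6`;
this increases with `i`, so the last row is the largest.
-/

open Finset

theorem sum_range_triangle (n : ℕ) :
    ∑ s ∈ range (n + 1), ((s : ℝ) + 1) * ((s : ℝ) + 2) / 2
      = ((n : ℝ) + 1) * ((n : ℝ) + 2) * ((n : ℝ) + 3) / 6 := by
  induction n with
  | zero => norm_num
  | succ n ih =>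
    rw [sum_range_succ, ih]
    push_cast
    ring

theorem Fin.sum_ite_le_sub {M : Type*} [AddCommMonoid M] (f : ℕ → M) {K i : ℕ} (hi : i < K) :
    ∑ j : Fin K, (if (j : ℕ) ≤ i then f (i - j) else 0) = ∑ s ∈ range (i + 1), f s := by
  rw [Fin.sum_univ_eq_sum_range (fun j => if j ≤ i then f (i - j) else 0), ← sum_filter,
    ← sum_range_reflect f]
  congr 1
  ext j
  simp only [mem_filter, mem_range]
  omega

theorem abs_ite_le_sub_triangle {i j : ℕ} :
    |if j ≤ i then ((i : ℝ) - j + 1) * ((i : ℝ) - j + 2) / 2 else 0|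
      = if j ≤ i then (((i - j : ℕ) : ℝ) + 1) * (((i - j : ℕ) : ℝ) + 2) / 2 else 0 := by
  split_ifs with h
  · rw [← Nat.cast_sub h]
    exact abs_of_nonneg (by positivity)
  · exact abs_zero

/-- Appendix B of the paper: `‖E₀⁻¹‖_∞ = K(K+1)(K+2)/6`. Each row sum of absolute
values of `F = E₀⁻¹` equals `(i+1)(i+2)(i+3)/6`, the maximum row sum equals
`K(K+1)(K+2)/6`, and it is attained at the last row `i = K−1`. -/
theorem extrapolation_matrix_inverse_norm (K : ℕ) (hK : 1 ≤ K)
    (F : Matrix (Fin K) (Fin K) ℝ)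
    (hF : ∀ i j : Fin K, F i j =
      if (j : ℕ) ≤ (i : ℕ) then
        (((i : ℕ) : ℝ) - ((j : ℕ) : ℝ) + 1) * (((i : ℕ) : ℝ) - ((j : ℕ) : ℝ) + 2) / 2
      else 0) :
    (∀ i : Fin K, ∑ j, |F i j| =
        (((i : ℕ) : ℝ) + 1) * (((i : ℕ) : ℝ) + 2) * (((i : ℕ) : ℝ) + 3) / 6) ∧
    (∑ j, |F (⟨K - 1, by omega⟩ : Fin K) j| = (K : ℝ) * ((K : ℝ) + 1) * ((K : ℝ) + 2) / 6) ∧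
    (∀ i : Fin K, ∑ j, |F i j| ≤ (K : ℝ) * ((K : ℝ) + 1) * ((K : ℝ) + 2) / 6) := by
  have row_sum (i : Fin K) : ∑ j, |F i j| =
      (((i : ℕ) : ℝ) + 1) * (((i : ℕ) : ℝ) + 2) * (((i : ℕ) : ℝ) + 3) / 6 := by
    simp_rw [hF i, abs_ite_le_sub_triangle]
    rw [Fin.sum_ite_le_sub (fun s => ((s : ℝ) + 1) * ((s : ℝ) + 2) / 2) i.isLt,
      sum_range_triangle]
  refine ⟨row_sum, ?_, fun i => ?_⟩
  · rw [row_sum]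
    push_cast [Nat.cast_sub hK]
    ring
  · have hi : ((i : ℕ) : ℝ) + 1 ≤ K := by exact_mod_cast i.isLt
    rw [row_sum]
    gcongr ?_ * ?_ * ?_ / _ <;> linarith
end

section
/- Let N ∈ ℕ, let I ⊆ Fin N with I ≠ Fin N (the 'interior' index set, whose complement is the 'boundary'), and let M : Matrix (Fin N) (Fin N) ℝ satisfy, for every i ∈ I: (a) ∑_{j} M i j = 0 (the full row sum over all N columns vanishes), (b) M i i < 0, and (c) M i j > 0 for all j ≠ i. Let v : Fin N → ℝ satisfy ∑_{j ∈ I} M i j · v j > 0 for every i ∈ I. Then for any i ∈ I at which v attains its global maximum (i.e. v j ≤ v i for all j ∈ Fin N), one has v i < 0. In particular, if v has a nonnegative global maximum, then every global maximizer of v lies in the boundary set (Fin N) \ I. (This is the discrete maximum principle for the GPDM matrix established in Appendix B of the paper, used to prove convergence of the Dirichlet problem in Theorem 4.1.) -/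
/-!
At an interior maximizer `i`, positivity of the off-diagonal entries gives
`∑_{j ∈ I} M i j v j ≤ (∑_{j ∈ I} M i j) v i`. Since the full row sum vanishes and the row has
positive weight on the nonempty boundary, `∑_{j ∈ I} M i j < 0`; so `v i ≥ 0` would make the
interior sum nonpositive, contradicting `∑_{j ∈ I} M i j v j > 0`.
-/

open Finset

variable {ι : Type*}

theorem Finset.sum_mul_le_sum_mul_of_le_apply (s : Finset ι) (w v : ι → ℝ) (i : ι)
    (hw : ∀ j ∈ s, j ≠ i → 0 ≤ w j) (hv : ∀ j ∈ s, v j ≤ v i) :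
    ∑ j ∈ s, w j * v j ≤ (∑ j ∈ s, w j) * v i := by
  rw [sum_mul]
  refine sum_le_sum fun j hj => ?_
  rcases eq_or_ne j i with rfl | hji
  · exact le_rfl
  · exact mul_le_mul_of_nonneg_left (hv j hj) (hw j hj hji)

theorem Finset.sum_neg_of_sum_eq_zero_of_pos_compl [Fintype ι] [DecidableEq ι] (I : Finset ι)
    (hI : I ≠ univ) (w : ι → ℝ) (hsum : ∑ j, w j = 0) (hpos : ∀ j ∉ I, 0 < w j) :
    ∑ j ∈ I, w j < 0 := by
  have hcompl : Iᶜ.Nonempty := by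
    rwa [nonempty_iff_ne_empty, Ne, compl_eq_empty_iff]
  have hpos_compl : 0 < ∑ j ∈ Iᶜ, w j :=
    sum_pos (fun j hj => hpos j (mem_compl.1 hj)) hcompl
  have := sum_add_sum_compl I w
  linarith

theorem interior_sum_mul_nonpos_at_nonneg_max [Fintype ι] [DecidableEq ι] (I : Finset ι) (hI : I ≠ univ)
    (M : Matrix ι ι ℝ) (v : ι → ℝ) {i : ι} (hi : i ∈ I) (hrow : ∑ j, M i j = 0)
    (hoff : ∀ j, j ≠ i → 0 < M i j) (hmax : ∀ j, v j ≤ v i) (hvi : 0 ≤ v i) :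
    ∑ j ∈ I, M i j * v j ≤ 0 := by
  have hneg : ∑ j ∈ I, M i j < 0 :=
    sum_neg_of_sum_eq_zero_of_pos_compl I hI (M i) hrow
      fun j hj => hoff j fun hji => hj (hji ▸ hi)
  calc ∑ j ∈ I, M i j * v j ≤ (∑ j ∈ I, M i j) * v i :=
        sum_mul_le_sum_mul_of_le_apply I (M i) v i (fun j _ hji => (hoff j hji).le)
          fun j _ => hmax j
    _ ≤ 0 := mul_nonpos_of_nonpos_of_nonneg hneg.le hvi

theorem discrete_maximum_principle_general (N : ℕ) (I : Finset (Fin N)) (hI : I ≠ Finset.univ)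
    (M : Matrix (Fin N) (Fin N) ℝ)
    (hrow : ∀ i ∈ I, ∑ j, M i j = 0)
    (hoff : ∀ i ∈ I, ∀ j, j ≠ i → 0 < M i j)
    (v : Fin N → ℝ)
    (hv : ∀ i ∈ I, 0 < ∑ j ∈ I, M i j * v j) :
    (∀ i ∈ I, (∀ j, v j ≤ v i) → v i < 0) ∧
    (∀ i : Fin N, (∀ j, v j ≤ v i) → 0 ≤ v i → i ∉ I) := by
  have interior_max_neg : ∀ i ∈ I, (∀ j, v j ≤ v i) → v i < 0 := fun i hi hmax => by
    by_contra! hvi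
    exact (hv i hi).not_ge
      (interior_sum_mul_nonpos_at_nonneg_max I hI M v hi (hrow i hi) (hoff i hi) hmax hvi)
  exact ⟨interior_max_neg, fun i hmax hvi hi => (interior_max_neg i hi hmax).not_ge hvi⟩

/-- Discrete maximum principle for the GPDM matrix (Appendix B, used in Theorem 4.1):
if the interior rows of `M` have zero full row sum, negative diagonal and positive
off-diagonal entries, and `∑_{j ∈ I} M i j · v j > 0` on interior rows, then any
interior global maximizer of `v` has `v i < 0`; in particular any global maximizer
with nonnegative value lies in the boundary set. -/
theorem discrete_maximum_principle (N : ℕ) (I : Finset (Fin N)) (hI : I ≠ Finset.univ)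
    (M : Matrix (Fin N) (Fin N) ℝ)
    (hrow : ∀ i ∈ I, ∑ j, M i j = 0)
    (hdiag : ∀ i ∈ I, M i i < 0)
    (hoff : ∀ i ∈ I, ∀ j, j ≠ i → 0 < M i j)
    (v : Fin N → ℝ)
    (hv : ∀ i ∈ I, 0 < ∑ j ∈ I, M i j * v j) :
    (∀ i ∈ I, (∀ j, v j ≤ v i) → v i < 0) ∧
    (∀ i : Fin N, (∀ j, v j ≤ v i) → 0 ≤ v i → i ∉ I) :=
  discrete_maximum_principle_general N I hI M hrow hoff v hv
end
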